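/- arXiv:1108.0726 — 2 statements merged into one kernel-verified Lean document; each statement's English description precedes it below -/
import Mathlib

section
/- For i.i.d. Bernoulli(p) bond percolation on a finite graph, the expected number of open clusters E_p[M] is a polynomial in p whose derivative satisfies d/dp E_p[M] = − Σ_{b ∈ E} P_p(G(b)), where G(b) is the event that the endpoints of b are not connected by an open path avoiding b. -/
open MeasureTheory ENNReal

/-- The graph of open edges. -/
def openGraph {V E : Type*} (ends : E → V × V) (ω : E → Bool) : SimpleGraph V :=
  SimpleGraph.fromRel (fun x y => ∃ e, ω e = true ∧ ends e = (x, y))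

/-- The number of open clusters. -/
noncomputable def clusterCount (V : Type*) {E : Type*} (ends : E → V × V) (ω : E → Bool) : ℕ :=
  Nat.card (openGraph ends ω).ConnectedComponent

/-- The Bernoulli(p) weight of a configuration: p^{#open} (1-p)^{#closed}. -/
def wt {E : Type*} [Fintype E] (p : ℝ) (ω : E → Bool) : ℝ :=
  ∏ e, if ω e then p else 1 - p

/-- The probability of a set of configurations under i.i.d. Bernoulli(p) edge states. -/
noncomputable def pr {E : Type*} [Fintype E] [DecidableEq E] (p : ℝ) (A : Set (E → Bool)) : ℝ :=
  ∑ ω : E → Bool, A.indicator (wt p) ω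

/-- The expectation of a real random variable under i.i.d. Bernoulli(p) edge states. -/
noncomputable def expct {E : Type*} [Fintype E] [DecidableEq E] (p : ℝ) (f : (E → Bool) → ℝ) : ℝ :=
  ∑ ω : E → Bool, wt p ω * f ω

/-!
Russo's formula: differentiating the product weight edge by edge gives
`d/dp E_p[f] = Σ_b E_p[f(ω^b) - f(ω_b)]`, where `ω^b`, `ω_b` are `ω` with `b` opened, closed.
Opening `b` adds the edge between its endpoints to the graph of `ω_b`, which merges two clusters
exactly when the endpoints are not already joined, i.e. on `G(b)`; so `M(ω^b) - M(ω_b) = -1_{G(b)}`.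
-/

open SimpleGraph Function

namespace SimpleGraph
variable {V : Type*} {G : SimpleGraph V} {x y : V}

theorem reachable_sup_edge_iff {u v : V} :
    (G ⊔ edge x y).Reachable u v ↔ G.Reachable u v ∨
      (G.Reachable u x ∧ G.Reachable y v) ∨ (G.Reachable u y ∧ G.Reachable x v) := by
  constructor
  · rintro ⟨p⟩
    induction p with
    | nil => exact .inl .rfl
    | cons hadj _ ih =>
      rcases hadj with hadj | hadj
      · have h := hadj.reachable
        rcases ih with h' | ⟨h₁, h₂⟩ | ⟨h₁, h₂⟩
        exacts [.inl (h.trans h'), .inr (.inl ⟨h.trans h₁, h₂⟩), .inr (.inr ⟨h.trans h₁, h₂⟩)]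
      · obtain ⟨⟨rfl, rfl⟩ | ⟨rfl, rfl⟩, -⟩ := (edge_adj ..).mp hadj
        · rcases ih with h' | ⟨-, h₂⟩ | ⟨-, h₂⟩
          exacts [.inr (.inl ⟨.rfl, h'⟩), .inr (.inl ⟨.rfl, h₂⟩), .inl h₂]
        · rcases ih with h' | ⟨-, h₂⟩ | ⟨-, h₂⟩
          exacts [.inr (.inr ⟨.rfl, h'⟩), .inl h₂, .inr (.inr ⟨.rfl, h₂⟩)]
  · have hxy : (G ⊔ edge x y).Reachable x y := by
      by_cases h : x = y
      · exact h ▸ .rfl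
      · exact Adj.reachable (.inr ((edge_adj ..).mpr ⟨.inl ⟨rfl, rfl⟩, h⟩))
    have hmono {a b : V} (h : G.Reachable a b) : (G ⊔ edge x y).Reachable a b :=
      h.mono le_sup_left
    rintro (h | ⟨h₁, h₂⟩ | ⟨h₁, h₂⟩)
    exacts [hmono h, ((hmono h₁).trans hxy).trans (hmono h₂),
      ((hmono h₁).trans hxy.symm).trans (hmono h₂)]

theorem card_connectedComponent_sup_edge_of_reachable (hxy : G.Reachable x y) :
    Nat.card (G ⊔ edge x y).ConnectedComponent = Nat.card G.ConnectedComponent :=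
  Nat.card_congr <| Quot.congrRight fun _ _ => reachable_sup_edge_iff.trans
    ⟨fun h => h.elim id (Or.rec (fun h => (h.1.trans hxy).trans h.2)
      (fun h => (h.1.trans hxy.symm).trans h.2)), .inl⟩

theorem card_connectedComponent_sup_edge_of_not_reachable [Finite V] (hxy : ¬G.Reachable x y) :
    Nat.card (G ⊔ edge x y).ConnectedComponent + 1 = Nat.card G.ConnectedComponent := by
  set φ := ConnectedComponent.map (Hom.ofLE (le_sup_left : G ≤ G ⊔ edge x y))
  set cy := G.connectedComponentMk y
  have hφ (u v : V) : φ (G.connectedComponentMk u) = φ (G.connectedComponentMk v) ↔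
      (G ⊔ edge x y).Reachable u v := ConnectedComponent.eq
  have hinj : Set.InjOn φ {cy}ᶜ := by
    intro C hC D hD h
    induction C using ConnectedComponent.ind with | h u =>
    induction D using ConnectedComponent.ind with | h v =>
    rcases reachable_sup_edge_iff.mp ((hφ u v).mp h) with h | ⟨-, h⟩ | ⟨h, -⟩
    exacts [ConnectedComponent.sound h, (hD (ConnectedComponent.sound h.symm)).elim,
      (hC (ConnectedComponent.sound h)).elim]
  have himage : φ '' {cy}ᶜ = Set.univ := by
    refine Set.eq_univ_of_forall fun C' => ?_
    obtain ⟨C, rfl⟩ := ConnectedComponent.surjective_map_ofLE le_sup_left C'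
    by_cases hC : C = cy
    · refine ⟨G.connectedComponentMk x, fun h => hxy (ConnectedComponent.exact h), ?_⟩
      rw [hC, hφ]
      exact reachable_sup_edge_iff.mpr (.inr (.inl ⟨.rfl, .rfl⟩))
    · exact ⟨C, hC, rfl⟩
  have hpos : 0 < Nat.card G.ConnectedComponent := @Nat.card_pos _ ⟨cy⟩ _
  rw [← Set.ncard_univ, ← himage, hinj.ncard_image, Set.ncard_compl, Set.ncard_singleton]
  omega

end SimpleGraph

section Russo
variable {E : Type*} [Fintype E] [DecidableEq E]

def wtOff (p : ℝ) (b : E) (ω : E → Bool) : ℝ :=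
  ∏ e ∈ Finset.univ.erase b, if ω e then p else 1 - p

theorem wt_eq_mul_wtOff (p : ℝ) (b : E) (ω : E → Bool) :
    wt p ω = (if ω b then p else 1 - p) * wtOff p b ω :=
  (Finset.mul_prod_erase _ _ (Finset.mem_univ b)).symm

theorem wtOff_update (p : ℝ) (b : E) (ω : E → Bool) (v : Bool) :
    wtOff p b (update ω b v) = wtOff p b ω :=
  Finset.prod_congr rfl fun _ he => by rw [update_of_ne (Finset.ne_of_mem_erase he)]

theorem wt_update_true_add_wt_update_false (p : ℝ) (b : E) (ω : E → Bool) :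
    wt p (update ω b true) + wt p (update ω b false) = wtOff p b ω := by
  simp only [wt_eq_mul_wtOff p b, wtOff_update, update_self, ite_true, Bool.false_eq_true,
    ite_false]
  ring

theorem hasDerivAt_wt (p : ℝ) (ω : E → Bool) :
    HasDerivAt (fun q => wt q ω) (∑ b, wtOff p b ω * if ω b then 1 else -1) p := by
  have h := HasDerivAt.fun_finsetProd (u := Finset.univ) (x := p)
    (f := fun e q => if ω e then q else 1 - q) (f' := fun e => if ω e then 1 else -1)
    fun e _ => by
      split
      · exact hasDerivAt_id p
      · simpa using (hasDerivAt_id p).const_sub 1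
  simp only [smul_eq_mul] at h
  exact h

theorem two_mul_sum_eq_sum_update {R : Type*} [NonAssocSemiring R] (F : (E → Bool) → R) (b : E) :
    2 * ∑ ω, F ω = ∑ ω, (F (update ω b true) + F (update ω b false)) := by
  let flip : Equiv.Perm (E → Bool) := Involutive.toPerm (fun ω => update ω b !(ω b))
    fun ω => by simp
  calc 2 * ∑ ω, F ω = ∑ ω, (F ω + F (flip ω)) := by
        rw [Finset.sum_add_distrib, Equiv.sum_comp flip F, two_mul]
    _ = _ := Finset.sum_congr rfl fun ω _ => by
        show F ω + F (update ω b !(ω b)) = _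
        have hω : update ω b (ω b) = ω := update_eq_self b ω
        cases h : ω b <;> rw [h] at hω <;> simp [hω, add_comm]

/-- Both sides, summed over the pair `ω^b, ω_b`, give `wtOff p b ω * (f ω^b - f ω_b)`. -/
theorem sum_wtOff_mul_sign_mul (f : (E → Bool) → ℝ) (p : ℝ) (b : E) :
    ∑ ω, (wtOff p b ω * if ω b then 1 else -1) * f ω =
      expct p (fun ω => f (update ω b true) - f (update ω b false)) := by
  rw [← mul_right_inj' (two_ne_zero' ℝ), expct, two_mul_sum_eq_sum_update _ b,
    two_mul_sum_eq_sum_update _ b]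
  refine Finset.sum_congr rfl fun ω _ => ?_
  simp only [wtOff_update, update_idem, update_self]
  rw [← wt_update_true_add_wt_update_false p b ω]
  simp only [ite_true, Bool.false_eq_true, ite_false]
  ring

theorem hasDerivAt_expct (f : (E → Bool) → ℝ) (p : ℝ) :
    HasDerivAt (fun q => expct q f)
      (∑ b, expct p (fun ω => f (update ω b true) - f (update ω b false))) p := by
  have h := HasDerivAt.fun_sum fun ω (_ : ω ∈ Finset.univ) => (hasDerivAt_wt p ω).mul_const (f ω)
  simp only [Finset.sum_mul] at h
  rw [Finset.sum_comm] at h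
  simp only [sum_wtOff_mul_sign_mul] at h
  exact h

theorem pr_eq_expct_indicator (p : ℝ) (A : Set (E → Bool)) :
    pr p A = expct p (A.indicator 1) :=
  Finset.sum_congr rfl fun ω _ => by by_cases h : ω ∈ A <;> simp [h]

end Russo

section Percolation
variable {V E : Type*}

theorem openGraph_update_true [DecidableEq E] (ends : E → V × V) (ω : E → Bool) (b : E) :
    openGraph ends (update ω b true) =
      openGraph ends (update ω b false) ⊔ edge (ends b).1 (ends b).2 := by
  ext u v
  simp only [openGraph, fromRel_adj, sup_adj, edge_adj, update_apply]
  grind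

theorem clusterCount_update_true_sub_false [Finite V] [DecidableEq E] (ends : E → V × V)
    (ω : E → Bool) (b : E) :
    (clusterCount V ends (update ω b true) : ℝ) - clusterCount V ends (update ω b false) =
      -{ω | ¬(openGraph ends (update ω b false)).Reachable (ends b).1 (ends b).2}.indicator 1 ω := by
  rw [clusterCount, clusterCount, openGraph_update_true]
  by_cases h : (openGraph ends (update ω b false)).Reachable (ends b).1 (ends b).2
  · simp [h, card_connectedComponent_sup_edge_of_reachable h]
  · rw [← card_connectedComponent_sup_edge_of_not_reachable h]
    simp [h]

end Percolation

/-- The expected number of open clusters, as a polynomial function of p, has derivative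
−Σ_b P_p(G(b)), where G(b) is the event that the endpoints of b are not connected by an
open path avoiding b. -/
theorem stmt_8 {V E : Type*} [Finite V] [Fintype E] [DecidableEq E]
    (ends : E → V × V) (p : ℝ) :
    HasDerivAt (fun q => expct q (fun ω => (clusterCount V ends ω : ℝ)))
      (-∑ b : E, pr p {ω | ¬ (openGraph ends (Function.update ω b false)).Reachable
          (ends b).1 (ends b).2}) p := by
  convert hasDerivAt_expct (fun ω => (clusterCount V ends ω : ℝ)) p using 1
  simp only [clusterCount_update_true_sub_false, pr_eq_expct_indicator, expct, mul_neg,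
    Finset.sum_neg_distrib]
end

section
/- Fix n > m and a bond b with both endpoints in B(m) ⊂ Z^d. If the endpoints of b are not connected by an open path avoiding b within the box B(n), but are connected by an open path avoiding b in the full lattice, then there exist two disjoint open paths from the two endpoints of b each reaching the boundary of the box v_1(b) + B(n − m − 1). -/
/-!
Take an open path `p` from `u` to `v` avoiding `b`. Since `u` and `v` are not joined inside
`B(n)`, the path visits a vertex `o` outside `B(n)`, hence at ℓ∞-distance more than
`R = n - m - 1` from `u`, while `u` and `v` are within distance `R` of `u` when `R ≥ 1`.
Distance to `u` grows by at most one along a lattice bond, so the parts of `p` from `u` to `o`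
and from `v` back to `o` each first reach distance exactly `R` before `o`. These two initial
segments are disjoint because `p` is a path. When `R = 0` the trivial path at `u` and the
reversed path `p` do the job.
-/

open MeasureTheory ENNReal Filter

/-- The open subgraph of the Z^d lattice determined by a configuration
`ω : Sym2 (Fin d → ℤ) → Bool` (`true` = open): `x ~ y` iff they are at ℓ¹-distance 1
and the bond between them is open. -/
def openLattice (d : ℕ) (ω : Sym2 (Fin d → ℤ) → Bool) : SimpleGraph (Fin d → ℤ) :=
  SimpleGraph.fromRel (fun x y => (∑ i, |x i - y i|) = 1 ∧ ω s(x, y) = true)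

/-- The open subgraph of the lattice using only bonds with both endpoints in the box
B(n) = [-n,n]^d. -/
def openLatticeBox (d n : ℕ) (ω : Sym2 (Fin d → ℤ) → Bool) : SimpleGraph (Fin d → ℤ) :=
  SimpleGraph.fromRel (fun x y => (∑ i, |x i - y i|) = 1 ∧ ω s(x, y) = true
    ∧ (∀ i, |x i| ≤ (n : ℤ)) ∧ (∀ i, |y i| ≤ (n : ℤ)))

/-- G_n(b) for the bond b = {u,v}: the event that u and v are not joined by an open path
avoiding b inside B(n). -/
def GboxEvent (d n : ℕ) (u v : Fin d → ℤ) : Set (Sym2 (Fin d → ℤ) → Bool) :=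
  {ω | ¬ (openLatticeBox d n (Function.update ω s(u, v) false)).Reachable u v}

/-- G(b) for the bond b = {u,v}: the event that u and v are not joined by an open path
avoiding b in all of Z^d. -/
def GfullEvent (d : ℕ) (u v : Fin d → ℤ) : Set (Sym2 (Fin d → ℤ) → Bool) :=
  {ω | ¬ (openLattice d (Function.update ω s(u, v) false)).Reachable u v}

namespace SimpleGraph

variable {V : Type*} {G : SimpleGraph V}

namespace Walk

/-- Discrete intermediate value theorem. -/
theorem exists_eq_append_apply_eq {f : V → ℕ} (hf : ∀ x y, G.Adj x y → f y ≤ f x + 1) {r : ℕ} :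
    ∀ {a b : V} (w : G.Walk a b), f a ≤ r → r ≤ f b →
      ∃ (x : V) (w₁ : G.Walk a x) (w₂ : G.Walk x b),
        w = w₁.append w₂ ∧ f x = r ∧ ∀ z ∈ w₁.support, f z ≤ r
  | _, _, .nil, ha, hb => ⟨_, .nil, .nil, rfl, le_antisymm ha hb, by simpa using ha⟩
  | a, _, .cons h p, ha, hb => by
    by_cases har : f a = r
    · exact ⟨a, .nil, .cons h p, rfl, har, by simpa using ha⟩
    · obtain ⟨x, w₁, w₂, rfl, hx, hw₁⟩ :=
        exists_eq_append_apply_eq hf p (by have := hf _ _ h; omega) hb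
      refine ⟨x, .cons h w₁, w₂, rfl, hx, ?_⟩
      simpa [ha] using hw₁

variable [DecidableEq V]

theorem IsPath.disjoint_support_takeUntil_tail_dropUntil {a b o : V} {p : G.Walk a b}
    (hp : p.IsPath) (ho : o ∈ p.support) :
    (p.takeUntil o ho).support.Disjoint (p.dropUntil o ho).support.tail := by
  have hnodup := hp.support_nodup
  rw [← p.take_spec ho, support_append] at hnodup
  exact List.disjoint_of_nodup_append hnodup

theorem IsPath.exists_disjoint_paths_to_level {f : V → ℕ}
    (hf : ∀ x y, G.Adj x y → f y ≤ f x + 1)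
    {r : ℕ} {a b o : V} {p : G.Walk a b} (hp : p.IsPath) (ho : o ∈ p.support)
    (ha : f a ≤ r) (hb : f b ≤ r) (ho_gt : r < f o) :
    ∃ (x y : V) (w₁ : G.Walk a x) (w₂ : G.Walk b y), w₁.IsPath ∧ w₂.IsPath ∧
      w₁.support.Disjoint w₂.support ∧ f x = r ∧ f y = r := by
  obtain ⟨x, w₁, w₁', hq₁, hx, hw₁⟩ :=
    exists_eq_append_apply_eq hf (p.takeUntil o ho) ha ho_gt.le
  obtain ⟨y, w₂, w₂', hq₂, hy, -⟩ :=
    exists_eq_append_apply_eq hf (p.dropUntil o ho).reverse hb ho_gt.le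
  have hw₁_path : w₁.IsPath := (hq₁ ▸ hp.takeUntil ho).of_append_left
  have hw₂_path : w₂.IsPath := (hq₂ ▸ (hp.dropUntil ho).reverse).of_append_left
  refine ⟨x, y, w₁, w₂, hw₁_path, hw₂_path, fun z hz₁ hz₂ => ?_, hx, hy⟩
  have hzq₁ : z ∈ (p.takeUntil o ho).support := by
    rw [hq₁]; exact support_subset_support_append_left _ _ hz₁
  have hzq₂ : z ∈ (p.dropUntil o ho).support := by
    rw [← List.mem_reverse, ← support_reverse, hq₂]
    exact support_subset_support_append_left _ _ hz₂
  rw [← cons_tail_support, List.mem_cons] at hzq₂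
  rcases hzq₂ with rfl | hz_tail
  · exact absurd (hw₁ z hz₁) ho_gt.not_ge
  · exact hp.disjoint_support_takeUntil_tail_dropUntil ho hzq₁ hz_tail

end Walk

end SimpleGraph

section Lattice

variable {d : ℕ}

/-- The ℓ∞-distance on `ℤ^d`; it vanishes identically when `d = 0`. -/
def supDist (x y : Fin d → ℤ) : ℕ :=
  Finset.univ.sup fun i => (x i - y i).natAbs

theorem natAbs_sub_le_supDist (x y : Fin d → ℤ) (i : Fin d) :
    (x i - y i).natAbs ≤ supDist x y :=
  Finset.le_sup (f := fun i => (x i - y i).natAbs) (Finset.mem_univ i)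

theorem supDist_le_iff {x y : Fin d → ℤ} {r : ℕ} :
    supDist x y ≤ r ↔ ∀ i, (x i - y i).natAbs ≤ r := by
  simp [supDist]

theorem supDist_self (x : Fin d → ℤ) : supDist x x = 0 := by
  simp [supDist]

theorem supDist_eq_iff [Nonempty (Fin d)] {x y : Fin d → ℤ} {r : ℕ} :
    supDist x y = r ↔ (∀ i, |x i - y i| ≤ (r : ℤ)) ∧ ∃ i, |x i - y i| = (r : ℤ) := by
  simp only [Int.abs_eq_natAbs, Nat.cast_le, Nat.cast_inj]
  obtain ⟨j, -, hj⟩ :=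
    Finset.exists_mem_eq_sup Finset.univ Finset.univ_nonempty fun i => (x i - y i).natAbs
  constructor
  · rintro rfl
    exact ⟨natAbs_sub_le_supDist x y, j, hj.symm⟩
  · rintro ⟨hle, i, rfl⟩
    exact le_antisymm (supDist_le_iff.2 hle) (natAbs_sub_le_supDist x y i)

theorem natAbs_sub_le_one_of_sum_abs_sub_eq_one {x y : Fin d → ℤ}
    (h : (∑ i, |x i - y i|) = 1) (i : Fin d) : (x i - y i).natAbs ≤ 1 := by
  have := Finset.single_le_sum (f := fun j => |x j - y j|) (fun j _ => abs_nonneg _)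
    (Finset.mem_univ i)
  rw [Int.abs_eq_natAbs] at this
  omega

theorem nonempty_fin_of_sum_abs_sub_eq_one {x y : Fin d → ℤ} (h : (∑ i, |x i - y i|) = 1) :
    Nonempty (Fin d) := by
  by_contra hd
  simp [not_nonempty_iff.1 hd] at h

theorem openLattice_mono : Monotone (openLattice d) := by
  intro ω₁ ω₂ hω x y
  simp only [openLattice, SimpleGraph.fromRel_adj]
  rintro ⟨hne, h | h⟩
  · exact ⟨hne, .inl ⟨h.1, Bool.le_iff_imp.1 (hω _) h.2⟩⟩
  · exact ⟨hne, .inr ⟨h.1, Bool.le_iff_imp.1 (hω _) h.2⟩⟩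

theorem sum_abs_sub_eq_one_of_adj {ω : Sym2 (Fin d → ℤ) → Bool} {x y : Fin d → ℤ}
    (h : (openLattice d ω).Adj x y) : (∑ i, |x i - y i|) = 1 := by
  rw [openLattice, SimpleGraph.fromRel_adj] at h
  rcases h.2 with h | h
  · exact h.1
  · simpa only [abs_sub_comm] using h.1

theorem supDist_le_supDist_add_one_of_adj {ω : Sym2 (Fin d → ℤ) → Bool} {x y : Fin d → ℤ}
    (h : (openLattice d ω).Adj x y) (z : Fin d → ℤ) : supDist y z ≤ supDist x z + 1 := by
  refine supDist_le_iff.2 fun i => ?_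
  have hxy := natAbs_sub_le_one_of_sum_abs_sub_eq_one (sum_abs_sub_eq_one_of_adj h) i
  have hxz := natAbs_sub_le_supDist x z i
  omega

theorem openLatticeBox_adj_of_adj {n : ℕ} {ω : Sym2 (Fin d → ℤ) → Bool} {x y : Fin d → ℤ}
    (h : (openLattice d ω).Adj x y) (hx : ∀ i, |x i| ≤ (n : ℤ)) (hy : ∀ i, |y i| ≤ (n : ℤ)) :
    (openLatticeBox d n ω).Adj x y := by
  rw [openLattice, SimpleGraph.fromRel_adj] at h
  rw [openLatticeBox, SimpleGraph.fromRel_adj]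
  rcases h with ⟨hne, h | h⟩
  · exact ⟨hne, .inl ⟨h.1, h.2, hx, hy⟩⟩
  · exact ⟨hne, .inr ⟨h.1, h.2, hy, hx⟩⟩

theorem reachable_openLatticeBox_of_walk {n : ℕ} {ω : Sym2 (Fin d → ℤ) → Bool}
    {a b : Fin d → ℤ} (w : (openLattice d ω).Walk a b)
    (hw : ∀ z ∈ w.support, ∀ i, |z i| ≤ (n : ℤ)) :
    (openLatticeBox d n ω).Reachable a b := by
  refine (w.transfer (openLatticeBox d n ω) fun e he => ?_).reachable
  induction e using Sym2.ind with
  | h x y =>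
    exact openLatticeBox_adj_of_adj (w.adj_of_mem_edges he)
      (hw x (w.fst_mem_support_of_mem_edges he)) (hw y (w.snd_mem_support_of_mem_edges he))

end Lattice

theorem stmt_11_general {d m n : ℕ} (hmn : m < n) (ω : Sym2 (Fin d → ℤ) → Bool)
    (u v : Fin d → ℤ) (hbond : (∑ i, |u i - v i|) = 1)
    (hu : ∀ i, |u i| ≤ (m : ℤ))
    (hGn : ω ∈ GboxEvent d n u v) (hG : ω ∉ GfullEvent d u v) :
    ∃ (x y : Fin d → ℤ) (w₁ : (openLattice d ω).Walk u x) (w₂ : (openLattice d ω).Walk v y),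
      w₁.IsPath ∧ w₂.IsPath ∧
      (∀ z ∈ w₁.support, z ∈ w₂.support → z = u ∨ z = v) ∧
      ((∀ i, |x i - u i| ≤ ((n - m - 1 : ℕ) : ℤ)) ∧ ∃ i, |x i - u i| = ((n - m - 1 : ℕ) : ℤ)) ∧
      ((∀ i, |y i - u i| ≤ ((n - m - 1 : ℕ) : ℤ)) ∧ ∃ i, |y i - u i| = ((n - m - 1 : ℕ) : ℤ)) := by
  have := nonempty_fin_of_sum_abs_sub_eq_one hbond
  have hω : Function.update ω s(u, v) false ≤ ω := update_le_self_iff.2 (Bool.false_le _)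
  obtain ⟨p, hp⟩ : ∃ p : (openLattice d (Function.update ω s(u, v) false)).Walk u v, p.IsPath :=
    (not_not.1 hG).elim_path fun p => ⟨p.1, p.2⟩
  obtain ⟨o, ho, i, hoi⟩ : ∃ o ∈ p.support, ∃ i, (n : ℤ) < |o i| := by
    by_contra! hbox
    exact hGn (reachable_openLatticeBox_of_walk p hbox)
  have hp' := hp.mapLe (openLattice_mono hω)
  obtain rfl | hlt : n = m + 1 ∨ m + 1 < n := by omega
  · refine ⟨u, u, .nil, _, .nil, hp'.reverse, fun z hz _ => .inl (by simpa using hz), ?_, ?_⟩ <;>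
      exact supDist_eq_iff.1 (by rw [supDist_self]; omega)
  · have hf x y (h : (openLattice d ω).Adj x y) := supDist_le_supDist_add_one_of_adj h u
    have hvu : supDist v u ≤ n - m - 1 := supDist_le_iff.2 fun j => by
      have := natAbs_sub_le_one_of_sum_abs_sub_eq_one hbond j
      omega
    have hou : n - m - 1 < supDist o u := by
      have := natAbs_sub_le_supDist o u i
      have := hu i
      rw [Int.abs_eq_natAbs] at this hoi
      omega
    obtain ⟨x, y, w₁, w₂, hw₁, hw₂, hdisj, hx, hy⟩ :=
      hp'.exists_disjoint_paths_to_level hf (by rwa [SimpleGraph.Walk.support_mapLe_eq_support])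
        (by rw [supDist_self]; omega) hvu hou
    exact ⟨x, y, w₁, w₂, hw₁, hw₂, fun z h₁ h₂ => (hdisj h₁ h₂).elim,
      supDist_eq_iff.1 hx, supDist_eq_iff.1 hy⟩

/-- If the endpoints u, v of a bond b lying in B(m) are not joined by an open path
avoiding b inside B(n) (n > m), but are joined by an open path avoiding b in the full
lattice, then there are two open paths, from u and from v, vertex-disjoint except possibly
at u and v, each reaching the boundary of the box u + B(n−m−1). -/
theorem stmt_11 {d m n : ℕ} (hmn : m < n) (ω : Sym2 (Fin d → ℤ) → Bool)
    (u v : Fin d → ℤ) (hbond : (∑ i, |u i - v i|) = 1)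
    (hu : ∀ i, |u i| ≤ (m : ℤ)) (hv : ∀ i, |v i| ≤ (m : ℤ))
    (hGn : ω ∈ GboxEvent d n u v) (hG : ω ∉ GfullEvent d u v) :
    ∃ (x y : Fin d → ℤ) (w₁ : (openLattice d ω).Walk u x) (w₂ : (openLattice d ω).Walk v y),
      w₁.IsPath ∧ w₂.IsPath ∧
      (∀ z ∈ w₁.support, z ∈ w₂.support → z = u ∨ z = v) ∧
      ((∀ i, |x i - u i| ≤ ((n - m - 1 : ℕ) : ℤ)) ∧ ∃ i, |x i - u i| = ((n - m - 1 : ℕ) : ℤ)) ∧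
      ((∀ i, |y i - u i| ≤ ((n - m - 1 : ℕ) : ℤ)) ∧ ∃ i, |y i - u i| = ((n - m - 1 : ℕ) : ℤ)) :=
  stmt_11_general hmn ω u v hbond hu hGn hG
end
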